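/- If a separably 𝓑𝓛-injective Banach lattice Z contains a closed sublattice lattice isomorphic to c₀, then the density character of Z is at least the cardinality of the continuum 𝔠. -/

import Mathlib

/-!
For `A ⊆ ℕ` let `Y_A = c₀ + ℝ·1_A ⊆ ℓ∞`: a closed separable subspace, and a sublattice
since `c₀` is solid and `1_A ≥ 0`. Extending `T` along `c₀ ⊆ Y_A` gives lattice homomorphisms
`T_A : Y_A → Z`; put `z_A = T_A 1_A`. If `m ∈ A \ B` then `0 ≤ T e_m ≤ z_A` and
`T e_m ⊓ z_B = 0`, so `‖z_A - z_B‖ ≥ ‖T e_m‖ ≥ c`. Thus `A ↦ z_A` is a `c`-separated family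
of `𝔠` points of `Z`.
-/

open Filter ZeroAtInftyContinuousMap
open scoped ZeroAtInfty

noncomputable section

/-- Pointwise supremum on `c₀ = C₀(ℕ, ℝ)`. -/
instance : Max C₀(ℕ, ℝ) :=
  ⟨fun f g =>
    { toContinuousMap := (f : C(ℕ, ℝ)) ⊔ (g : C(ℕ, ℝ)),
      zero_at_infty' := by
        have h := (zero_at_infty f).max (zero_at_infty g)
        rw [max_self] at h
        exact h }⟩

/-- Pointwise infimum on `c₀ = C₀(ℕ, ℝ)`. -/
instance : Min C₀(ℕ, ℝ) :=
  ⟨fun f g =>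
    { toContinuousMap := (f : C(ℕ, ℝ)) ⊓ (g : C(ℕ, ℝ)),
      zero_at_infty' := by
        have h := (zero_at_infty f).min (zero_at_infty g)
        rw [min_self] at h
        exact h }⟩

/-- `c₀ = C₀(ℕ, ℝ)` is a lattice (with the pointwise operations). -/
instance : Lattice C₀(ℕ, ℝ) :=
  let _ : LE C₀(ℕ, ℝ) := ⟨fun f g => (f : ℕ → ℝ) ≤ g⟩
  let _ : LT C₀(ℕ, ℝ) := ⟨fun f g => (f : ℕ → ℝ) < g⟩
  DFunLike.coe_injective.lattice _ Iff.rfl Iff.rfl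
    (fun _ _ => rfl) (fun _ _ => rfl)

/-- A Banach lattice `Z` is separably `𝓑𝓛`-injective if for every separable
Banach lattice `Y`, every closed sublattice `X ⊆ Y` (given by a lattice
isometric embedding) and every lattice homomorphism `T : X → Z`, there is a
lattice homomorphism extension `T' : Y → Z`. -/
def SeparablyBLInjective (Z : Type)
    [NormedAddCommGroup Z] [Lattice Z] [HasSolidNorm Z] [IsOrderedAddMonoid Z] [NormedSpace ℝ Z] [CompleteSpace Z] : Prop :=
  ∀ (X Y : Type)
    (_ : NormedAddCommGroup X) (_ : Lattice X) (_ : HasSolidNorm X)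
    (_ : IsOrderedAddMonoid X) (_ : NormedSpace ℝ X) (_ : CompleteSpace X)
    (_ : NormedAddCommGroup Y) (_ : Lattice Y) (_ : HasSolidNorm Y)
    (_ : IsOrderedAddMonoid Y) (_ : NormedSpace ℝ Y) (_ : CompleteSpace Y)
    (_ : TopologicalSpace.SeparableSpace Y)
    (j : X →ₗᵢ[ℝ] Y) (T : X →L[ℝ] Z),
    (∀ a b : X, j (a ⊔ b) = j a ⊔ j b) → (∀ a b : X, T (a ⊔ b) = T a ⊔ T b) →
    ∃ T' : Y →L[ℝ] Z, (∀ a b : Y, T' (a ⊔ b) = T' a ⊔ T' b) ∧ ∀ x, T' (j x) = T x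

open Topology TopologicalSpace BoundedContinuousFunction

section LatticeHom

variable {E F G : Type*} [Lattice E] [Lattice F] [FunLike G E F] {f : G}

theorem map_inf_of_map_sup [AddCommGroup E] [IsOrderedAddMonoid E] [AddCommGroup F]
    [IsOrderedAddMonoid F] [AddMonoidHomClass G E F] (hf : ∀ a b, f (a ⊔ b) = f a ⊔ f b)
    (a b : E) : f (a ⊓ b) = f a ⊓ f b := by
  rw [← add_left_inj (f a ⊔ f b), inf_add_sup, ← hf, ← map_add, inf_add_sup, map_add]

theorem monotone_of_map_sup (hf : ∀ a b, f (a ⊔ b) = f a ⊔ f b) : Monotone f :=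
  fun a b hab => by rw [← sup_eq_right, ← hf, sup_eq_right.2 hab]

end LatticeHom

theorem abs_sup_sub_sup_le_add {E : Type*} [Lattice E] [AddCommGroup E] [IsOrderedAddMonoid E]
    (a b c d : E) : |a ⊔ b - c ⊔ d| ≤ |a - c| + |b - d| :=
  calc |a ⊔ b - c ⊔ d| = |a ⊔ b - c ⊔ b + (c ⊔ b - c ⊔ d)| := by rw [sub_add_sub_cancel]
    _ ≤ |a ⊔ b - c ⊔ b| + |c ⊔ b - c ⊔ d| := abs_add_le _ _
    _ ≤ |a - c| + |b - d| := by
      gcongr ?_ + ?_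
      · exact abs_sup_sub_sup_le_abs _ _ _
      · rw [sup_comm c, sup_comm c]
        exact abs_sup_sub_sup_le_abs _ _ _

theorem norm_le_norm_sub_of_le_of_inf_eq_zero {E : Type*} [NormedAddCommGroup E] [Lattice E]
    [HasSolidNorm E] [IsOrderedAddMonoid E] {v a b : E} (hv : 0 ≤ v) (hva : v ≤ a)
    (hvb : v ⊓ b = 0) : ‖v‖ ≤ ‖a - b‖ := by
  have hv_eq : v = v ⊔ b - b := by
    rw [eq_sub_iff_add_eq, ← inf_add_sup v b, hvb, zero_add]
  have hv_le : v ≤ (a - b) ⊔ 0 := by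
    rw [hv_eq, ← sub_self b, ← sup_sub]
    exact sub_le_sub_right (sup_le_sup_right hva b) b
  refine norm_le_norm_of_abs_le_abs ?_
  rw [abs_of_nonneg hv]
  exact hv_le.trans (sup_le (le_abs_self _) (abs_nonneg _))

theorem HasSolidNorm.of_map_sup {F E : Type*} [NormedAddCommGroup F] [Lattice F]
    [NormedAddCommGroup E] [Lattice E] [HasSolidNorm E] (f : F →+ E)
    (norm_map : ∀ x, ‖f x‖ = ‖x‖) (map_sup : ∀ a b, f (a ⊔ b) = f a ⊔ f b)
    (map_le_map_iff : ∀ {a b}, f a ≤ f b ↔ a ≤ b) : HasSolidNorm F where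
  solid a b h := by
    have map_abs : ∀ x, f |x| = |f x| := fun x => by rw [abs, map_sup, map_neg, abs]
    rw [← norm_map, ← norm_map]
    exact HasSolidNorm.solid (by rw [← map_abs, ← map_abs]; exact map_le_map_iff.2 h)

namespace Submodule

variable {R E : Type*} [Ring R] [AddCommGroup E] [Lattice E] [IsOrderedAddMonoid E] [Module R E]
  (S : Submodule R E) (hS : SupClosed (S : Set E))
include hS

theorem infClosed_of_supClosed : InfClosed (S : Set E) := fun a ha b hb => by
  rw [eq_sub_of_add_eq (inf_add_sup a b)]
  exact S.sub_mem (S.add_mem ha hb) (hS ha hb)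

abbrev latticeOfSupClosed : Lattice S :=
  letI : Max S := ⟨fun a b => ⟨a ⊔ b, hS a.2 b.2⟩⟩
  letI : Min S := ⟨fun a b => ⟨a ⊓ b, S.infClosed_of_supClosed hS a.2 b.2⟩⟩
  Subtype.coe_injective.lattice _ Iff.rfl Iff.rfl (fun _ _ => rfl) (fun _ _ => rfl)

end Submodule

open LatticeOrderedAddCommGroup in
theorem Submodule.supClosed_sup_span_singleton {E : Type*} [AddCommGroup E] [Lattice E]
    [IsOrderedAddMonoid E] [Module ℝ E] [SMulPosMono ℝ E] {I : Submodule ℝ E}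
    (hI : IsSolid (I : Set E)) {u : E} (hu : 0 ≤ u) :
    SupClosed ((I ⊔ ℝ ∙ u : Submodule ℝ E) : Set E) := by
  rintro _ hx _ hy
  obtain ⟨i, hi, _, hs, rfl⟩ := mem_sup.1 hx
  obtain ⟨j, hj, _, ht, rfl⟩ := mem_sup.1 hy
  obtain ⟨s, rfl⟩ := mem_span_singleton.1 hs
  obtain ⟨t, rfl⟩ := mem_span_singleton.1 ht
  have smul_sup : s • u ⊔ t • u = (s ⊔ t) • u :=
    (Monotone.map_sup (fun _ _ h => smul_le_smul_of_nonneg_right h hu) s t).symm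
  refine mem_sup.2 ⟨(i + s • u) ⊔ (j + t • u) - (s ⊔ t) • u, ?_, _,
    mem_span_singleton.2 ⟨_, rfl⟩, sub_add_cancel _ _⟩
  refine hI (I.add_mem (hI hi (abs_abs i).le) (hI hj (abs_abs j).le)) ?_
  rw [abs_of_nonneg (add_nonneg (abs_nonneg i) (abs_nonneg j)), ← smul_sup]
  simpa using abs_sup_sub_sup_le_add (i + s • u) (j + t • u) (s • u) (t • u)

universe u

theorem Dense.mk_le_of_pairwise_le_dist {α ι : Type u} [PseudoMetricSpace α] {D : Set α}
    (hD : Dense D) {z : ι → α} {c : ℝ} (hc : 0 < c)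
    (hz : Pairwise fun i j => c ≤ dist (z i) (z j)) : Cardinal.mk ι ≤ Cardinal.mk D := by
  choose d hdD hd using fun i => hD.exists_dist_lt (z i) (half_pos hc)
  refine Cardinal.mk_le_of_injective (f := fun i => (⟨d i, hdD i⟩ : D)) fun i j hij => ?_
  by_contra hne
  have hdj := hd j
  rw [← show d i = d j from congrArg Subtype.val hij] at hdj
  linarith [hz hne, hd i, dist_triangle_right (z i) (z j) (d i)]

instance BoundedContinuousFunction.instSMulPosMono {α : Type*} [TopologicalSpace α] :
    SMulPosMono ℝ (α →ᵇ ℝ) :=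
  ⟨fun _ hb _ _ h x => mul_le_mul_of_nonneg_right h (hb x)⟩

namespace ZeroAtInftyContinuousMap

def ofTendstoCofinite (g : ℕ →ᵇ ℝ) (hg : Tendsto g cofinite (𝓝 0)) : C₀(ℕ, ℝ) :=
  ⟨g.toContinuousMap, by rwa [cocompact_eq_cofinite]⟩

@[simp]
theorem coe_ofTendstoCofinite (g : ℕ →ᵇ ℝ) (hg : Tendsto g cofinite (𝓝 0)) :
    ⇑(ofTendstoCofinite g hg) = g :=
  rfl

theorem tendsto_cofinite (f : C₀(ℕ, ℝ)) : Tendsto f cofinite (𝓝 0) :=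
  cocompact_eq_cofinite ℕ ▸ zero_at_infty f

instance : HasSolidNorm C₀(ℕ, ℝ) :=
  HasSolidNorm.of_map_sup ⟨⟨toBCF, rfl⟩, fun _ _ => rfl⟩ (fun _ => norm_toBCF_eq_norm)
    (fun _ _ => rfl) Iff.rfl

instance : IsOrderedAddMonoid C₀(ℕ, ℝ) :=
  Function.Injective.isOrderedAddMonoid toBCF (fun _ _ => rfl) Iff.rfl

def single (m : ℕ) : C₀(ℕ, ℝ) :=
  ofTendstoCofinite (indicator {m} (isClopen_discrete _)) <|
    tendsto_const_nhds.congr' <| (eventually_cofinite_ne m).mono fun n hn => by simp [hn]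

theorem single_nonneg (m : ℕ) : 0 ≤ single m :=
  fun _ => Set.indicator_nonneg (fun _ _ => zero_le_one) _

theorem norm_single (m : ℕ) : ‖single m‖ = 1 := by
  rw [← norm_toBCF_eq_norm]
  refine le_antisymm ((norm_le zero_le_one).2 fun n => ?_) ?_
  · by_cases h : n = m <;> simp [single, h]
  · simpa [single] using (single m).toBCF.norm_coe_le_norm m

end ZeroAtInftyContinuousMap

def c0Submodule : Submodule ℝ (ℕ →ᵇ ℝ) where
  carrier := {g | Tendsto g cofinite (𝓝 0)}
  add_mem' hf hg := add_zero (0 : ℝ) ▸ hf.add hg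
  zero_mem' := tendsto_const_nhds
  smul_mem' c _ hg := by simpa using hg.const_smul c

theorem coe_c0Submodule : (c0Submodule : Set (ℕ →ᵇ ℝ)) = Set.range toBCF :=
  Set.ext fun g => ⟨fun hg => ⟨ofTendstoCofinite g hg, rfl⟩,
    by rintro ⟨f, rfl⟩; exact f.tendsto_cofinite⟩

theorem isClosed_c0Submodule : IsClosed (c0Submodule : Set (ℕ →ᵇ ℝ)) := by
  rw [coe_c0Submodule]
  exact isClosed_range_toBCF

open LatticeOrderedAddCommGroup in
theorem isSolid_c0Submodule : IsSolid (c0Submodule : Set (ℕ →ᵇ ℝ)) :=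
  fun _ hg _ h =>
    squeeze_zero_norm (fun n => HasSolidNorm.solid (h n)) (by simpa using hg.norm)

theorem c0Submodule_subset_closure_span_indicator_singleton :
    (c0Submodule : Set (ℕ →ᵇ ℝ)) ⊆
      closure (Submodule.span ℝ (Set.range fun n : ℕ => indicator {n} (isClopen_discrete _)) :
        Set (ℕ →ᵇ ℝ)) := by
  intro g hg
  refine Metric.mem_closure_iff.2 fun ε hε => ?_
  have hfin : {n | ε / 2 ≤ |g n|}.Finite := by
    simpa [Real.dist_eq] using eventually_cofinite.1 (Metric.tendsto_nhds.1 hg _ (half_pos hε))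
  refine ⟨∑ n ∈ hfin.toFinset, g n • indicator {n} (isClopen_discrete _),
    Submodule.sum_mem _ fun n _ => Submodule.smul_mem _ _ (Submodule.subset_span ⟨n, rfl⟩),
    lt_of_le_of_lt ((dist_le (half_pos hε).le).2 fun m => ?_) (half_lt_self hε)⟩
  by_cases hm : ε / 2 ≤ |g m|
  · simpa [Pi.single_apply, hm] using (half_pos hε).le
  · simpa [Pi.single_apply, hm, Real.dist_eq] using (not_le.1 hm).le

theorem isSeparable_c0Submodule : IsSeparable (c0Submodule : Set (ℕ →ᵇ ℝ)) :=
  ((Set.countable_range _).isSeparable.span (R := ℝ)).closure.mono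
    c0Submodule_subset_closure_span_indicator_singleton

def c0AdjoinIndicator (A : Set ℕ) : Submodule ℝ (ℕ →ᵇ ℝ) :=
  c0Submodule ⊔ ℝ ∙ indicator A (isClopen_discrete A)

namespace c0AdjoinIndicator

variable (A : Set ℕ)

theorem supClosed : SupClosed (c0AdjoinIndicator A : Set (ℕ →ᵇ ℝ)) :=
  Submodule.supClosed_sup_span_singleton isSolid_c0Submodule
    fun _ => Set.indicator_nonneg (fun _ _ => zero_le_one) _

instance : Lattice (c0AdjoinIndicator A) :=
  (c0AdjoinIndicator A).latticeOfSupClosed (supClosed A)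

instance : HasSolidNorm (c0AdjoinIndicator A) :=
  HasSolidNorm.of_map_sup (c0AdjoinIndicator A).subtype.toAddMonoidHom (fun _ => rfl)
    (fun _ _ => rfl) Iff.rfl

instance : IsOrderedAddMonoid (c0AdjoinIndicator A) :=
  Function.Injective.isOrderedAddMonoid Subtype.val (fun _ _ => rfl) Iff.rfl

instance : CompleteSpace (c0AdjoinIndicator A) :=
  have := Submodule.isClosed_sup_finiteDimensional _ (ℝ ∙ indicator A (isClopen_discrete A))
    isClosed_c0Submodule
  this.completeSpace_coe

instance : SeparableSpace (c0AdjoinIndicator A) := by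
  refine IsSeparable.separableSpace ?_
  rw [c0AdjoinIndicator, ← Submodule.span_eq c0Submodule, ← Submodule.span_union]
  exact (isSeparable_c0Submodule.union (Set.countable_singleton _).isSeparable).span

def ofC0 : C₀(ℕ, ℝ) →ₗᵢ[ℝ] c0AdjoinIndicator A where
  toFun f := ⟨f.toBCF, Submodule.mem_sup_left f.tendsto_cofinite⟩
  map_add' _ _ := rfl
  map_smul' _ _ := rfl
  norm_map' _ := norm_toBCF_eq_norm

theorem ofC0_sup (f g : C₀(ℕ, ℝ)) : ofC0 A (f ⊔ g) = ofC0 A f ⊔ ofC0 A g :=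
  rfl

def indicatorElem : c0AdjoinIndicator A :=
  ⟨indicator A (isClopen_discrete A),
    Submodule.mem_sup_right (Submodule.mem_span_singleton_self _)⟩

variable {A}

theorem ofC0_single_le_indicatorElem {m : ℕ} (hm : m ∈ A) :
    ofC0 A (single m) ≤ indicatorElem A :=
  fun n => Set.indicator_le_indicator_of_subset (Set.singleton_subset_iff.2 hm)
    (fun _ => zero_le_one) n

theorem ofC0_single_inf_indicatorElem {m : ℕ} (hm : m ∉ A) :
    ofC0 A (single m) ⊓ indicatorElem A = 0 := by
  refine Subtype.ext (BoundedContinuousFunction.ext fun n => ?_)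
  change Set.indicator {m} 1 n ⊓ Set.indicator A 1 n = 0
  by_cases hn : n = m
  · subst hn
    simp [hm]
  · simp only [Set.indicator_of_notMem (Set.notMem_singleton_iff.2 hn)]
    exact inf_eq_left.2 (Set.indicator_nonneg (fun _ _ => zero_le_one) n)

end c0AdjoinIndicator

open c0AdjoinIndicator in
theorem SeparablyBLInjective.exists_extension_c0AdjoinIndicator {Z : Type}
    [NormedAddCommGroup Z] [Lattice Z] [HasSolidNorm Z] [IsOrderedAddMonoid Z] [NormedSpace ℝ Z] [CompleteSpace Z]
    (hZ : SeparablyBLInjective Z) {T : C₀(ℕ, ℝ) →L[ℝ] Z} (hT : ∀ f g, T (f ⊔ g) = T f ⊔ T g)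
    (A : Set ℕ) :
    ∃ T' : c0AdjoinIndicator A →L[ℝ] Z,
      (∀ a b, T' (a ⊔ b) = T' a ⊔ T' b) ∧ ∀ f, T' (ofC0 A f) = T f :=
  hZ C₀(ℕ, ℝ) (c0AdjoinIndicator A)
    inferInstance inferInstance inferInstance inferInstance inferInstance inferInstance
    inferInstance inferInstance inferInstance inferInstance inferInstance inferInstance
    inferInstance (ofC0 A) T (ofC0_sup A) hT

open c0AdjoinIndicator in
/-- If a separably `𝓑𝓛`-injective Banach lattice `Z` contains a closed
sublattice lattice isomorphic to `c₀` (i.e. there is a lattice homomorphism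
from `c₀ = C₀(ℕ, ℝ)` into `Z` which is an isomorphism onto its range), then
the density character of `Z` is at least the continuum: every dense subset of
`Z` has cardinality at least `𝔠`. -/
theorem sep_injective_with_c0_nonseparable (Z : Type)
    [NormedAddCommGroup Z] [Lattice Z] [HasSolidNorm Z] [IsOrderedAddMonoid Z] [NormedSpace ℝ Z] [CompleteSpace Z]
    (hZ : SeparablyBLInjective Z)
    (T : C₀(ℕ, ℝ) →L[ℝ] Z)
    (hTlat : ∀ f g : C₀(ℕ, ℝ), T (f ⊔ g) = T f ⊔ T g)
    (hTbelow : ∃ c : ℝ, 0 < c ∧ ∀ f : C₀(ℕ, ℝ), c * ‖f‖ ≤ ‖T f‖) :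
    ∀ D : Set Z, Dense D → Cardinal.continuum ≤ Cardinal.mk D := by
  intro D hD
  obtain ⟨c, hc, hTc⟩ := hTbelow
  choose TA hTA_sup hTA_ext using hZ.exists_extension_c0AdjoinIndicator hTlat
  let z (A : Set ℕ) : Z := TA A (indicatorElem A)
  have norm_sub_ge {A B : Set ℕ} {m : ℕ} (hA : m ∈ A) (hB : m ∉ B) : c ≤ ‖z A - z B‖ :=
    calc c = c * ‖single m‖ := by rw [norm_single, mul_one]
      _ ≤ ‖T (single m)‖ := hTc _
      _ ≤ ‖z A - z B‖ := by
        refine norm_le_norm_sub_of_le_of_inf_eq_zero ?_ ?_ ?_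
        · simpa using monotone_of_map_sup hTlat (single_nonneg m)
        · rw [← hTA_ext A]
          exact monotone_of_map_sup (hTA_sup A) (ofC0_single_le_indicatorElem hA)
        · rw [← hTA_ext B, ← map_inf_of_map_sup (hTA_sup B), ofC0_single_inf_indicatorElem hB,
            map_zero]
  have separated : Pairwise fun A B => c ≤ dist (z A) (z B) := by
    intro A B hAB
    obtain ⟨m, hm⟩ := not_forall.1 (mt Set.ext hAB)
    rw [dist_eq_norm]
    by_cases hA : m ∈ A
    · exact norm_sub_ge hA fun hB => hm (iff_of_true hA hB)
    · rw [norm_sub_rev]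
      exact norm_sub_ge (not_not.1 fun hB => hm (iff_of_false hA hB)) hA
  rw [← Cardinal.mk_set_nat]
  exact hD.mk_le_of_pairwise_le_dist hc separated

end
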